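/- arXiv:1511.00547 — 2 statements merged into one kernel-verified Lean document; each statement's English description precedes it below -/
import Mathlib

section
/- Chebyshev-type fourth moment inequality used in Corollary 4.1: for jointly chaotic eigenfunctions, if F₁ ∈ ker(L + λ_{p₁} Id), F₂ ∈ ker(L + λ_{p₂} Id) and F₁·conj(F₂) lies in ⊕_{k=0}^{p₁+p₂} ker(L + λ_k Id) (with λ_k = k), then ∫ |Γ(F₁,F₂)|² dμ ≤ ((p₁+p₂)/2) ∫ conj(F₁)·F₂·Γ(F₁,F₂) dμ, where 2Γ(F₁,F₂) = (L + (p₁+p₂)Id)(F₁·conj(F₂)). -/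
/-!
Write `F₁ conj F₂ = ∑ₖ Gₖ` with `L Gₖ = -k Gₖ` and `n = p₁ + p₂`. Then `2Γ = ∑ₖ (n - k) Gₖ` and
`n F₁ conj F₂ - 2Γ = ∑ₖ k Gₖ`, so the claim is `0 ≤ Re ∫ (∑ₖ k Gₖ) conj (∑ₖ (n - k) / 2 Gₖ)`,
which orthogonality of the eigenfunctions turns into `∑ₖ k (n - k) / 2 ∫ |Gₖ|² ≥ 0`.

Nothing makes the cross terms `Gⱼ conj Gₖ` integrable, so orthogonality cannot be used term by
term. Instead, moving powers of `L` across the integral shows that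
`∫ (∑ⱼ λⱼ⁻ᵘ aⱼ Gⱼ) conj (∑ₖ λₖᵘ bₖ Gₖ)` does not depend on `u`. A polynomial `P` with `P 1 = 1`
vanishing at every other ratio `λₖ / λⱼ` combines these integrands into the diagonal
`∑ₖ aₖ conj bₖ |Gₖ|²`; and if one of them is not integrable, the common value is the junk value `0`.
-/

open MeasureTheory Polynomial ComplexConjugate

theorem Module.End.pow_apply_of_apply_eq_smul {R M : Type*} [Semiring R] [AddCommMonoid M]
    [Module R M] {f : Module.End R M} {v : M} {c : R} (hv : f v = c • v) (u : ℕ) :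
    (f ^ u) v = c ^ u • v := by
  induction u with
  | zero => simp
  | succ u ih => rw [pow_succ', Module.End.mul_apply, ih, map_smul, hv, smul_smul, pow_succ]

theorem Polynomial.exists_eval_eq_one_and_eval_eq_zero {K : Type*} [Field K] [DecidableEq K]
    (s : Finset K) (z₀ : K) : ∃ P : K[X], P.eval z₀ = 1 ∧ ∀ z ∈ s, z ≠ z₀ → P.eval z = 0 :=
  ⟨Lagrange.basis (insert z₀ s) id z₀,
    Lagrange.eval_basis_self (Set.injOn_id _) (Finset.mem_insert_self _ _),
    fun _ hz hne => Lagrange.eval_basis_of_ne (v := id) hne.symm (Finset.mem_insert_of_mem hz)⟩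

def IsFormallySelfAdjoint {E : Type*} [MeasurableSpace E] (μ : Measure E)
    (L : (E → ℂ) →ₗ[ℂ] (E → ℂ)) : Prop :=
  ∀ F G : E → ℂ, ∫ x, L F x * conj (G x) ∂μ = ∫ x, F x * conj (L G x) ∂μ

section

variable {E ι : Type*} [Fintype ι] {G : ι → E → ℂ}

theorem linearCombination_apply_apply (a : ι → ℂ) (x : E) :
    Fintype.linearCombination ℂ G a x = ∑ i, a i * G i x := by
  simp only [Fintype.linearCombination_apply, Finset.sum_apply, Pi.smul_apply, smul_eq_mul]

theorem sum_coeff_mul_linearCombination_mul_conj (eig : ι → ℝ) (P : ℂ[X]) (a b : ι → ℂ)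
    (x : E) :
    ∑ u ∈ Finset.range (P.natDegree + 1), P.coeff u *
        (Fintype.linearCombination ℂ G (fun i => ((eig i : ℂ) ^ u)⁻¹ * a i) x
          * conj (Fintype.linearCombination ℂ G (fun i => (eig i : ℂ) ^ u * b i) x))
      = ∑ i, ∑ j, P.eval ((eig j : ℂ) / eig i) * (a i * G i x * conj (b j * G j x)) := by
  simp only [linearCombination_apply_apply, map_sum, Finset.sum_mul, Finset.mul_sum,
    eval_eq_sum_range]
  conv_rhs => rw [Finset.sum_comm]
  conv_lhs => rw [Finset.sum_comm]
  refine Finset.sum_congr rfl fun j _ => ?_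
  conv_lhs => rw [Finset.sum_comm]
  refine Finset.sum_congr rfl fun i _ => Finset.sum_congr rfl fun u _ => ?_
  simp only [map_mul, map_pow, Complex.conj_ofReal, div_pow]
  ring

variable {L : (E → ℂ) →ₗ[ℂ] (E → ℂ)} {eig : ι → ℝ}

theorem sum_coeff_mul_linearCombination_mul_conj_eq_diag {a : ι → ℂ}
    (ha : ∀ i, eig i = 0 → a i = 0) (b : ι → ℂ) {P : ℂ[X]} (hP1 : P.eval 1 = 1)
    (hP0 : ∀ i j, i ≠ j → eig i ≠ 0 → P.eval ((eig j : ℂ) / eig i) = 0) (x : E) :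
    ∑ u ∈ Finset.range (P.natDegree + 1), P.coeff u *
        (Fintype.linearCombination ℂ G (fun i => ((eig i : ℂ) ^ u)⁻¹ * a i) x
          * conj (Fintype.linearCombination ℂ G (fun i => (eig i : ℂ) ^ u * b i) x))
      = ∑ i, a i * G i x * conj (b i * G i x) := by
  rw [sum_coeff_mul_linearCombination_mul_conj]
  refine Finset.sum_congr rfl fun i _ => ?_
  by_cases hai : a i = 0
  · simp [hai]
  have hi : eig i ≠ 0 := fun h => hai (ha i h)
  rw [Finset.sum_eq_single i (fun j _ hji => by rw [hP0 i j hji.symm hi, zero_mul]) (by simp),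
    div_self (Complex.ofReal_ne_zero.mpr hi), hP1, one_mul]

theorem pow_apply_linearCombination (hG : ∀ i, L (G i) = (eig i : ℂ) • G i) (u : ℕ)
    (a : ι → ℂ) :
    (L ^ u) (Fintype.linearCombination ℂ G a)
      = Fintype.linearCombination ℂ G (fun i => (eig i : ℂ) ^ u * a i) := by
  simp only [Fintype.linearCombination_apply, map_sum, map_smul,
    Module.End.pow_apply_of_apply_eq_smul (hG _), smul_smul, mul_comm]

theorem apply_eq_linearCombination_of_eq_sum (hG : ∀ i, L (G i) = (eig i : ℂ) • G i)
    {H : E → ℂ} (hH : ∀ x, H x = ∑ i, G i x) :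
    L H = Fintype.linearCombination ℂ G (fun i => (eig i : ℂ)) := by
  have hH' : H = Fintype.linearCombination ℂ G 1 := by
    funext x
    simp [hH, linearCombination_apply_apply]
  simpa [hH'] using pow_apply_linearCombination hG 1 1

section Gamma

variable (hG : ∀ i, L (G i) = (eig i : ℂ) • G i) {H Γ : E → ℂ} (hH : ∀ x, H x = ∑ i, G i x)
  {c : ℝ} (hΓ : ∀ x, 2 * Γ x = L H x + c * H x)
include hG hH hΓ

theorem linearCombination_neg_eq_of_two_mul_eq :
    Fintype.linearCombination ℂ G (fun i => ((-eig i : ℝ) : ℂ))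
      = fun x => c * H x - 2 * Γ x := by
  funext x
  have h2 := hΓ x
  rw [apply_eq_linearCombination_of_eq_sum hG hH, linearCombination_apply_apply] at h2
  rw [linearCombination_apply_apply]
  push_cast
  simp only [neg_mul, Finset.sum_neg_distrib]
  linear_combination h2

theorem linearCombination_half_add_eq_of_two_mul_eq :
    Fintype.linearCombination ℂ G (fun i => (((c + eig i) / 2 : ℝ) : ℂ)) = Γ := by
  funext x
  have h2 := hΓ x
  rw [apply_eq_linearCombination_of_eq_sum hG hH, linearCombination_apply_apply, hH x] at h2
  have hsplit : ∑ i, (((c + eig i) / 2 : ℝ) : ℂ) * G i x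
      = (∑ i, (eig i : ℂ) * G i x + c * ∑ i, G i x) / 2 := by
    rw [Finset.mul_sum, ← Finset.sum_add_distrib, Finset.sum_div]
    refine Finset.sum_congr rfl fun i _ => ?_
    push_cast
    ring
  rw [linearCombination_apply_apply, hsplit]
  linear_combination -h2 / 2

end Gamma

variable [MeasurableSpace E] {μ : Measure E}

theorem integral_pow_apply_mul_conj (hsa : IsFormallySelfAdjoint μ L) (u : ℕ) (F F' : E → ℂ) :
    ∫ x, (L ^ u) F x * conj (F' x) ∂μ = ∫ x, F x * conj ((L ^ u) F' x) ∂μ := by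
  induction u generalizing F with
  | zero => rfl
  | succ u ih =>
    calc ∫ x, (L ^ (u + 1)) F x * conj (F' x) ∂μ
        = ∫ x, (L ^ u) (L F) x * conj (F' x) ∂μ := by rw [pow_succ, Module.End.mul_apply]
      _ = ∫ x, F x * conj (L ((L ^ u) F') x) ∂μ := by rw [ih, hsa]
      _ = ∫ x, F x * conj ((L ^ (u + 1)) F' x) ∂μ := by rw [pow_succ', Module.End.mul_apply]

theorem integral_linearCombination_inv_pow_mul_conj_pow
    (hsa : IsFormallySelfAdjoint μ L) (hG : ∀ i, L (G i) = (eig i : ℂ) • G i)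
    {a : ι → ℂ} (ha : ∀ i, eig i = 0 → a i = 0) (b : ι → ℂ) (u : ℕ) :
    ∫ x, Fintype.linearCombination ℂ G (fun i => ((eig i : ℂ) ^ u)⁻¹ * a i) x
        * conj (Fintype.linearCombination ℂ G (fun i => (eig i : ℂ) ^ u * b i) x) ∂μ
      = ∫ x, Fintype.linearCombination ℂ G a x
          * conj (Fintype.linearCombination ℂ G b x) ∂μ := by
  have hcancel : (fun i => (eig i : ℂ) ^ u * (((eig i : ℂ) ^ u)⁻¹ * a i)) = a := by
    funext i
    by_cases h : eig i = 0
    · simp [h, ha i h]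
    · exact mul_inv_cancel_left₀ (pow_ne_zero _ (Complex.ofReal_ne_zero.mpr h)) _
  rw [← pow_apply_linearCombination hG, ← integral_pow_apply_mul_conj hsa,
    pow_apply_linearCombination hG, hcancel]

theorem integral_linearCombination_mul_conj_eq_zero_or_eq_integral_diag
    (hsa : IsFormallySelfAdjoint μ L) (hG : ∀ i, L (G i) = (eig i : ℂ) • G i)
    (heig : Function.Injective eig) {a : ι → ℂ} (ha : ∀ i, eig i = 0 → a i = 0) (b : ι → ℂ) :
    ∫ x, Fintype.linearCombination ℂ G a x * conj (Fintype.linearCombination ℂ G b x) ∂μ = 0 ∨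
      ∫ x, Fintype.linearCombination ℂ G a x * conj (Fintype.linearCombination ℂ G b x) ∂μ
        = ∫ x, ∑ i, a i * G i x * conj (b i * G i x) ∂μ := by
  set T : ℕ → E → ℂ := fun u x =>
    Fintype.linearCombination ℂ G (fun i => ((eig i : ℂ) ^ u)⁻¹ * a i) x
      * conj (Fintype.linearCombination ℂ G (fun i => (eig i : ℂ) ^ u * b i) x)
  have hT := integral_linearCombination_inv_pow_mul_conj_pow hsa hG ha b
  obtain ⟨P, hP1, hP0⟩ := Polynomial.exists_eval_eq_one_and_eval_eq_zero
    (Finset.univ.image fun p : ι × ι => (eig p.2 : ℂ) / eig p.1) 1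
  have hPdiag := sum_coeff_mul_linearCombination_mul_conj_eq_diag (G := G) ha b hP1
    fun i j hij hi => hP0 _ (Finset.mem_image_of_mem _ (Finset.mem_univ (i, j))) (by
      rw [Ne, div_eq_one_iff_eq (Complex.ofReal_ne_zero.mpr hi), Complex.ofReal_inj]
      exact heig.ne hij.symm)
  by_cases hint : ∀ u ∈ Finset.range (P.natDegree + 1), Integrable (T u) μ
  · right
    calc _ = P.eval 1 * ∫ x, Fintype.linearCombination ℂ G a x
            * conj (Fintype.linearCombination ℂ G b x) ∂μ := by rw [hP1, one_mul]
      _ = ∑ u ∈ Finset.range (P.natDegree + 1), P.coeff u * ∫ x, T u x ∂μ := by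
        simp only [eval_eq_sum_range, one_pow, mul_one, Finset.sum_mul, hT, T]
      _ = ∫ x, ∑ i, a i * G i x * conj (b i * G i x) ∂μ := by
        simp only [← integral_const_mul]
        rw [← integral_finsetSum _ fun u hu => (hint u hu).const_mul _]
        simp only [T, hPdiag]
  · left
    push Not at hint
    obtain ⟨u, -, hu⟩ := hint
    rw [← hT u, integral_undef hu]

theorem re_integral_linearCombination_mul_conj_nonneg
    (hsa : IsFormallySelfAdjoint μ L) (hG : ∀ i, L (G i) = (eig i : ℂ) • G i)
    (heig : Function.Injective eig) {a b : ι → ℝ} (ha : ∀ i, eig i = 0 → a i = 0) (hab : ∀ i, 0 ≤ a i * b i) :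
    0 ≤ (∫ x, Fintype.linearCombination ℂ G (fun i => (a i : ℂ)) x
        * conj (Fintype.linearCombination ℂ G (fun i => (b i : ℂ)) x) ∂μ).re := by
  have hdiag : ∀ x, ∑ i, (a i : ℂ) * G i x * conj ((b i : ℂ) * G i x)
      = ((∑ i, a i * b i * ‖G i x‖ ^ 2 : ℝ) : ℂ) := fun x => by
    push_cast
    refine Finset.sum_congr rfl fun i _ => ?_
    rw [map_mul, Complex.conj_ofReal, ← Complex.mul_conj']
    ring
  rcases integral_linearCombination_mul_conj_eq_zero_or_eq_integral_diag hsa hG heig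
    (a := fun i => (a i : ℂ)) (fun i h => by simp [ha i h]) (fun i => (b i : ℂ)) with h | h
  · simp [h]
  · simp only [h, hdiag, integral_complex_ofReal, Complex.ofReal_re]
    exact integral_nonneg fun x => Finset.sum_nonneg fun i _ => mul_nonneg (hab i) (sq_nonneg _)

theorem re_integral_sub_mul_conj_nonneg_of_two_mul_eq (hsa : IsFormallySelfAdjoint μ L)
    (hG : ∀ i, L (G i) = (eig i : ℂ) • G i) (heig : Function.Injective eig)
    {H Γ : E → ℂ} (hH : ∀ x, H x = ∑ i, G i x) {c : ℝ}
    (hΓ : ∀ x, 2 * Γ x = L H x + c * H x) (hspec : ∀ i, eig i ∈ Set.Icc (-c) 0) :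
    0 ≤ (∫ x, (c * H x - 2 * Γ x) * conj (Γ x) ∂μ).re := by
  have key := re_integral_linearCombination_mul_conj_nonneg hsa hG heig
    (a := fun i => -eig i) (b := fun i => (c + eig i) / 2) (fun i h => by simp [h])
    (fun i => mul_nonneg (neg_nonneg.mpr (hspec i).2)
      (div_nonneg (by linarith [(hspec i).1]) zero_le_two))
  rwa [linearCombination_neg_eq_of_two_mul_eq hG hH hΓ,
    linearCombination_half_add_eq_of_two_mul_eq hG hH hΓ] at key

end

theorem re_integral_smul_sub_mul_conj {E : Type*} [MeasurableSpace E] {μ : Measure E}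
    {H Γ : E → ℂ} (c : ℝ) (hΓ : Integrable (fun x => ‖Γ x‖ ^ 2) μ)
    (hHΓ : Integrable (fun x => conj (H x) * Γ x) μ) :
    (∫ x, (c * H x - 2 * Γ x) * conj (Γ x) ∂μ).re
      = c * (∫ x, conj (H x) * Γ x ∂μ).re - 2 * ∫ x, ‖Γ x‖ ^ 2 ∂μ := by
  have hconj : ∀ x, conj ((c * H x - 2 * Γ x) * conj (Γ x))
      = c * (conj (H x) * Γ x) - 2 * ((‖Γ x‖ ^ 2 : ℝ) : ℂ) := fun x => by
    rw [Complex.ofReal_pow, ← Complex.mul_conj']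
    simp only [map_mul, map_sub, Complex.conj_ofReal, Complex.conj_conj, map_ofNat]
    ring
  have hΓ' : Integrable (fun x => ((‖Γ x‖ ^ 2 : ℝ) : ℂ)) μ := hΓ.ofReal
  rw [← Complex.conj_re, ← integral_conj]
  simp only [hconj]
  rw [integral_sub (hHΓ.const_mul _) (hΓ'.const_mul _), integral_const_mul,
    integral_const_mul, integral_complex_ofReal]
  simp

theorem chaotic_gamma_fourth_moment_bound_general {E : Type*} [MeasurableSpace E]
    (μ : Measure E)
    (L : (E → ℂ) →ₗ[ℂ] (E → ℂ))
    (hsa : ∀ F G : E → ℂ,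
      ∫ x, L F x * (starRingEnd ℂ) (G x) ∂μ = ∫ x, F x * (starRingEnd ℂ) (L G x) ∂μ)
    (p₁ p₂ : ℕ) (F₁ F₂ : E → ℂ)
    (G : Fin (p₁ + p₂ + 1) → (E → ℂ))
    (hGeig : ∀ k, L (G k) = fun x => -((k : ℕ) : ℂ) * G k x)
    (hchaos : (fun x => F₁ x * (starRingEnd ℂ) (F₂ x)) = fun x => ∑ k, G k x)
    (Γ : E → ℂ)
    (hΓ : ∀ x, 2 * Γ x =
      L (fun y => F₁ y * (starRingEnd ℂ) (F₂ y)) x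
        + ((p₁ + p₂ : ℕ) : ℂ) * (F₁ x * (starRingEnd ℂ) (F₂ x)))
    (hint1 : Integrable (fun x => ‖Γ x‖ ^ 2) μ)
    (hint2 : Integrable (fun x => (starRingEnd ℂ) (F₁ x) * F₂ x * Γ x) μ) :
    ∫ x, ‖Γ x‖ ^ 2 ∂μ
      ≤ ((p₁ + p₂ : ℝ) / 2) * (∫ x, (starRingEnd ℂ) (F₁ x) * F₂ x * Γ x ∂μ).re := by
  have hG : ∀ k, L (G k) = ((-(k : ℕ) : ℝ) : ℂ) • G k := fun k => by
    rw [hGeig k]; funext x; simp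
  have hH : ∀ x, F₁ x * conj (F₂ x) = ∑ k, G k x := congrFun hchaos
  have hΓ' : ∀ x, 2 * Γ x = L (fun y => F₁ y * conj (F₂ y)) x
      + ((p₁ + p₂ : ℕ) : ℝ) * (F₁ x * conj (F₂ x)) := by exact_mod_cast hΓ
  have key := re_integral_sub_mul_conj_nonneg_of_two_mul_eq hsa hG
    (fun i j h => Fin.ext (by simpa using h)) hH hΓ' fun k =>
      ⟨by simpa using (by exact_mod_cast k.is_le : ((k : ℕ) : ℝ) ≤ p₁ + p₂), by simp⟩
  rw [re_integral_smul_sub_mul_conj _ hint1 (by simpa [map_mul] using hint2)] at key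
  simp only [map_mul, Complex.conj_conj] at key
  push_cast at key ⊢
  linarith

/-- Corollary 3.2: for jointly chaotic eigenfunctions F₁ ∈ ker(L + p₁Id),
F₂ ∈ ker(L + p₂Id) with F₁·conj(F₂) expanding over the first p₁+p₂+1 eigenspaces
(λ_k = k), and 2Γ(F₁,F₂) = (L + (p₁+p₂)Id)(F₁·conj(F₂)), one has
∫|Γ(F₁,F₂)|² dμ ≤ ((p₁+p₂)/2) ∫ conj(F₁)F₂ Γ(F₁,F₂) dμ. -/
theorem chaotic_gamma_fourth_moment_bound {E : Type*} [MeasurableSpace E]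
    (μ : Measure E) [IsProbabilityMeasure μ]
    (L : (E → ℂ) →ₗ[ℂ] (E → ℂ))
    (hsa : ∀ F G : E → ℂ,
      ∫ x, L F x * (starRingEnd ℂ) (G x) ∂μ = ∫ x, F x * (starRingEnd ℂ) (L G x) ∂μ)
    (p₁ p₂ : ℕ) (F₁ F₂ : E → ℂ)
    (h₁ : L F₁ = fun x => -(p₁ : ℂ) * F₁ x)
    (h₂ : L F₂ = fun x => -(p₂ : ℂ) * F₂ x)
    (G : Fin (p₁ + p₂ + 1) → (E → ℂ))
    (hGeig : ∀ k, L (G k) = fun x => -((k : ℕ) : ℂ) * G k x)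
    (hchaos : (fun x => F₁ x * (starRingEnd ℂ) (F₂ x)) = fun x => ∑ k, G k x)
    (Γ : E → ℂ)
    (hΓ : ∀ x, 2 * Γ x =
      L (fun y => F₁ y * (starRingEnd ℂ) (F₂ y)) x
        + ((p₁ + p₂ : ℕ) : ℂ) * (F₁ x * (starRingEnd ℂ) (F₂ x)))
    (hint1 : Integrable (fun x => ‖Γ x‖ ^ 2) μ)
    (hint2 : Integrable (fun x => (starRingEnd ℂ) (F₁ x) * F₂ x * Γ x) μ) :
    ∫ x, ‖Γ x‖ ^ 2 ∂μ
      ≤ ((p₁ + p₂ : ℝ) / 2) * (∫ x, (starRingEnd ℂ) (F₁ x) * F₂ x * Γ x ∂μ).re :=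
  chaotic_gamma_fourth_moment_bound_general μ L hsa p₁ p₂ F₁ F₂ G hGeig hchaos Γ hΓ hint1 hint2
end

section
/- Orthogonality of complex Hermite polynomials: for the standard complex Gaussian measure γ with density (1/π)e^{-|z|²} on ℂ, the polynomials H_{p,q} satisfy ∫ H_{p,q}(z)·conj(H_{p',q'}(z)) dγ(z) = 0 whenever (p,q) ≠ (p',q'), and ∫ |H_{p,q}(z)|² dγ(z) = p!·q!. -/
open MeasureTheory
open scoped BigOperators

/-- The standard complex Gaussian measure on ℂ, with density (1/π)exp(-|z|²). -/
noncomputable def stdComplexGaussian : Measure ℂ :=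
  volume.withDensity fun z => ENNReal.ofReal (Real.exp (-(‖z‖) ^ 2) / Real.pi)

/-- The complex Hermite polynomial H_{p,q}. -/
noncomputable def complexHermite (p q : ℕ) (z : ℂ) : ℂ :=
  ∑ j ∈ Finset.range (min p q + 1),
    (p.choose j : ℂ) * (q.choose j : ℂ) * (j.factorial : ℂ) * (-1) ^ j
      * z ^ (p - j) * (starRingEnd ℂ) z ^ (q - j)

/-!
Multiplication by `z` acts by `z H_{p,q} = H_{p+1,q} + q H_{p,q-1}`, and its adjoint in `L²(γ)`,
multiplication by `z̄`, acts by `z̄ H_{c,d} = H_{c,d+1} + c H_{c-1,d}`. So the Gram matrix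
`⟪H_{p,q}, H_{c,d}⟫` satisfies a recursion lowering `p` (and, by conjugate symmetry, `c`) that
reduces it to the moments `∫ z^a z̄^b dγ`. These vanish for `a ≠ b` because `γ` is rotation
invariant, and equal `∫ |z|^{2a} dγ = Γ(a + 1)` for `a = b`.
-/

open Complex Finset
open scoped Real Nat ComplexConjugate

section Algebra

noncomputable def complexHermiteTerm (p q j : ℕ) (z : ℂ) : ℂ :=
  (p.choose j : ℂ) * (q.choose j : ℂ) * (j.factorial : ℂ) * (-1) ^ j
    * z ^ (p - j) * conj z ^ (q - j)

variable (p q : ℕ) (z : ℂ)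

lemma complexHermite_eq_sum_range {n : ℕ} (hn : min p q < n) :
    complexHermite p q z = ∑ j ∈ range n, complexHermiteTerm p q j z := by
  refine sum_subset (range_subset_range.2 hn) fun j _ hj => ?_
  have : p < j ∨ q < j := by simp only [mem_range, not_lt] at hj; omega
  rcases this with h | h <;> simp [Nat.choose_eq_zero_of_lt h]

lemma conj_complexHermite : conj (complexHermite p q z) = complexHermite q p z := by
  simp only [complexHermite, map_sum, min_comm p q]
  refine sum_congr rfl fun j _ => ?_
  simp only [map_mul, map_pow, map_natCast, map_neg, map_one, conj_conj]
  ring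

lemma complexHermite_zero_right : complexHermite p 0 z = z ^ p := by
  simp [complexHermite]

lemma complexHermite_zero_left : complexHermite 0 q z = conj z ^ q := by
  rw [← conj_complexHermite, complexHermite_zero_right, map_pow]

lemma complexHermiteTerm_succ_left_zero :
    complexHermiteTerm (p + 1) q 0 z = z * complexHermiteTerm p q 0 z := by
  simp [complexHermiteTerm, pow_succ', mul_assoc]

lemma complexHermiteTerm_succ_succ_succ (j : ℕ) :
    complexHermiteTerm (p + 1) (q + 1) (j + 1) z
      = z * complexHermiteTerm p (q + 1) (j + 1) z - (q + 1) * complexHermiteTerm p q j z := by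
  have hfall : ((q + 1).choose (j + 1) * (j + 1)! : ℂ) = (q + 1) * (q.choose j * j !) := by
    exact_mod_cast by
      rw [mul_comm, ← Nat.descFactorial_eq_factorial_mul_choose, Nat.succ_descFactorial_succ,
        Nat.descFactorial_eq_factorial_mul_choose, mul_comm j !]
  have hpow :
      (p.choose (j + 1) : ℂ) * z ^ (p - j) = z * (p.choose (j + 1) * z ^ (p - (j + 1))) := by
    rcases lt_or_ge p (j + 1) with h | h
    · simp [Nat.choose_eq_zero_of_lt h]
    · rw [show p - j = p - (j + 1) + 1 by omega, pow_succ]; ring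
  simp only [complexHermiteTerm, Nat.add_sub_add_right]
  rw [Nat.choose_succ_succ' p j, Nat.cast_add]
  linear_combination ((-1) ^ (j + 1) * (q + 1).choose (j + 1) * (j + 1)! * conj z ^ (q - j)) * hpow
    + ((-1) ^ (j + 1) * p.choose j * z ^ (p - j) * conj z ^ (q - j)) * hfall

lemma complexHermite_succ_left :
    complexHermite (p + 1) q z
      = z * complexHermite p q z - q * complexHermite p (q - 1) z := by
  rcases q with _ | q
  · simp [complexHermite_zero_right, pow_succ']
  rw [complexHermite_eq_sum_range (p + 1) (q + 1) z (n := q + 2) (by omega),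
    complexHermite_eq_sum_range p (q + 1) z (n := q + 2) (by omega), Nat.add_sub_cancel,
    complexHermite_eq_sum_range p q z (n := q + 1) (by omega), sum_range_succ',
    sum_range_succ' _ (q + 1)]
  simp only [complexHermiteTerm_succ_succ_succ, complexHermiteTerm_succ_left_zero, sum_sub_distrib,
    mul_add, mul_sum]
  push_cast
  ring

lemma complexHermite_succ_right :
    complexHermite p (q + 1) z
      = conj z * complexHermite p q z - p * complexHermite (p - 1) q z := by
  simpa only [map_sub, map_mul, map_natCast, conj_complexHermite]
    using congrArg conj (complexHermite_succ_left q p z)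

end Algebra

lemma integral_pow_mul_exp_neg_sq (n : ℕ) :
    ∫ r in Set.Ioi (0 : ℝ), r ^ n * Real.exp (-r ^ 2) = Real.Gamma ((n + 1) / 2) / 2 := by
  have h := integral_rpow_mul_exp_neg_rpow two_pos
    (by linarith [n.cast_nonneg (α := ℝ)] : -1 < (n : ℝ))
  simp_rw [Real.rpow_two, Real.rpow_natCast] at h
  rw [h]
  ring

section StdComplexGaussian

variable {E : Type*} [NormedAddCommGroup E] [NormedSpace ℝ E]

lemma integral_stdComplexGaussian (f : ℂ → E) :
    ∫ z, f z ∂stdComplexGaussian = ∫ z, (Real.exp (-‖z‖ ^ 2) / π) • f z := by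
  rw [stdComplexGaussian, integral_withDensity_eq_integral_toReal_smul
    (by fun_prop) (.of_forall fun _ => ENNReal.ofReal_lt_top)]
  simp_rw [ENNReal.toReal_ofReal (by positivity : 0 ≤ Real.exp _ / π)]

lemma integrable_stdComplexGaussian_iff {f : ℂ → E} :
    Integrable f stdComplexGaussian ↔
      Integrable fun z => (Real.exp (-‖z‖ ^ 2) / π) • f z := by
  rw [stdComplexGaussian, integrable_withDensity_iff_integrable_smul'
    (by fun_prop) (.of_forall fun _ => ENNReal.ofReal_lt_top)]
  simp_rw [ENNReal.toReal_ofReal (by positivity : 0 ≤ Real.exp _ / π)]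

lemma integrable_norm_pow_stdComplexGaussian (n : ℕ) :
    Integrable (fun z : ℂ => ‖z‖ ^ n) stdComplexGaussian := by
  rw [integrable_stdComplexGaussian_iff,
    integrable_fun_norm_addHaar volume (f := fun r => (Real.exp (-r ^ 2) / π) • r ^ n)]
  have h := (integrableOn_rpow_mul_exp_neg_mul_sq one_pos
    (by linarith [n.cast_nonneg (α := ℝ)] : -1 < ((n + 1 : ℕ) : ℝ))).div_const π
  refine IntegrableOn.congr_fun h (fun r _ => ?_) measurableSet_Ioi
  simp only [finrank_real_complex, Nat.reduceSub, Real.rpow_natCast, neg_one_mul,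
    smul_eq_mul]
  ring

lemma integral_norm_pow_stdComplexGaussian (n : ℕ) :
    ∫ z, ‖z‖ ^ n ∂stdComplexGaussian = Real.Gamma (n / 2 + 1) := by
  rw [integral_stdComplexGaussian,
    integral_fun_norm_addHaar volume fun r => (Real.exp (-r ^ 2) / π) • r ^ n]
  have hradial : ∫ r in Set.Ioi (0 : ℝ),
      r ^ (Module.finrank ℝ ℂ - 1) • (Real.exp (-r ^ 2) / π) • r ^ n
        = (∫ r in Set.Ioi (0 : ℝ), r ^ (n + 1) * Real.exp (-r ^ 2)) / π := by
    rw [← integral_div]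
    congr 1 with r
    simp only [finrank_real_complex, Nat.reduceSub, pow_one, smul_eq_mul]
    ring
  rw [hradial, integral_pow_mul_exp_neg_sq, Measure.real, volume_ball]
  simp only [finrank_real_complex, ENNReal.ofReal_one, one_pow, one_mul,
    ENNReal.coe_toReal, NNReal.coe_real_pi, nsmul_eq_mul, smul_eq_mul]
  push_cast
  rw [show ((n : ℝ) + 1 + 1) / 2 = n / 2 + 1 by ring]
  field_simp

lemma integral_comp_mul_left_stdComplexGaussian (u : Circle) (f : ℂ → E) :
    ∫ z, f (u * z) ∂stdComplexGaussian = ∫ z, f z ∂stdComplexGaussian := by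
  simp_rw [integral_stdComplexGaussian]
  simpa [rotation_apply, Circle.norm_coe] using (rotation u).measurePreserving.integral_comp
    (rotation u).toHomeomorph.measurableEmbedding (fun z => (Real.exp (-‖z‖ ^ 2) / π) • f z)

end StdComplexGaussian

def factorialDelta (m n : ℕ) : ℕ := if m = n then m ! else 0

lemma factorialDelta_self (m : ℕ) : factorialDelta m m = m ! := if_pos rfl

lemma factorialDelta_of_ne {m n : ℕ} (h : m ≠ n) : factorialDelta m n = 0 := if_neg h

lemma factorialDelta_comm (m n : ℕ) : factorialDelta m n = factorialDelta n m := by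
  rcases eq_or_ne m n with rfl | h
  · rfl
  · rw [factorialDelta_of_ne h, factorialDelta_of_ne h.symm]

lemma factorialDelta_succ_left (m n : ℕ) :
    factorialDelta (m + 1) n = n * factorialDelta m (n - 1) := by
  rcases n with _ | n
  · simp [factorialDelta]
  · by_cases h : m = n <;> simp [factorialDelta, h, Nat.factorial_succ]

lemma factorialDelta_succ_right (m n : ℕ) :
    factorialDelta m (n + 1) = m * factorialDelta (m - 1) n := by
  rw [factorialDelta_comm, factorialDelta_succ_left, factorialDelta_comm]

lemma integral_pow_mul_conj_pow_stdComplexGaussian (a b : ℕ) :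
    ∫ z, z ^ a * conj z ^ b ∂stdComplexGaussian = factorialDelta a b := by
  rcases eq_or_ne a b with rfl | hab
  · have hnorm (z : ℂ) : z ^ a * conj z ^ a = ((‖z‖ ^ (2 * a) : ℝ) : ℂ) := by
      rw [← mul_pow, mul_conj', pow_mul]
      norm_cast
    simp_rw [hnorm, integral_complex_ofReal, integral_norm_pow_stdComplexGaussian,
      factorialDelta_self]
    push_cast
    rw [show (2 * a : ℝ) / 2 + 1 = a + 1 by ring, Real.Gamma_nat_eq_factorial]
    norm_cast
  · set u := Circle.exp (π / (a - b))
    have hu : (u : ℂ) ^ a * conj (u : ℂ) ^ b = -1 := by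
      have hab' : (a : ℂ) - b ≠ 0 := sub_ne_zero.2 (Nat.cast_injective.ne hab)
      rw [Circle.coe_exp, ← exp_conj, ← exp_nat_mul, ← exp_nat_mul, ← exp_add,
        ← exp_pi_mul_I]
      congr 1
      simp only [map_mul, conj_ofReal, conj_I]
      push_cast
      field_simp
      ring
    have hrot := integral_comp_mul_left_stdComplexGaussian u fun z => z ^ a * conj z ^ b
    simp only [mul_pow, map_mul] at hrot
    simp_rw [show ∀ z : ℂ, (u : ℂ) ^ a * z ^ a * (conj (u : ℂ) ^ b * conj z ^ b)
        = -(z ^ a * conj z ^ b) from fun z => by linear_combination (z ^ a * conj z ^ b) * hu,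
      integral_neg] at hrot
    rw [factorialDelta_of_ne hab, Nat.cast_zero]
    linear_combination -hrot / 2

lemma memLp_two_pow_mul_conj_pow (m n : ℕ) :
    MemLp (fun z : ℂ => z ^ m * conj z ^ n) 2 stdComplexGaussian := by
  rw [memLp_two_iff_integrable_sq_norm (by fun_prop)]
  simpa only [norm_mul, norm_pow, norm_conj, ← pow_add, ← pow_mul]
    using integrable_norm_pow_stdComplexGaussian ((m + n) * 2)

lemma memLp_two_complexHermite (p q : ℕ) :
    MemLp (complexHermite p q) 2 stdComplexGaussian := by
  have hsum : complexHermite p q = ∑ j ∈ range (min p q + 1), fun z =>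
      ((p.choose j : ℂ) * q.choose j * j ! * (-1) ^ j) * (z ^ (p - j) * conj z ^ (q - j)) := by
    ext z
    simp only [complexHermite, Finset.sum_apply]
    exact sum_congr rfl fun j _ => by ring
  rw [hsum]
  exact memLp_finsetSum' _ fun j _ => (memLp_two_pow_mul_conj_pow _ _).const_mul _

lemma integrable_complexHermite_mul_conj (p q c d : ℕ) :
    Integrable (fun z => complexHermite p q z * conj (complexHermite c d z))
      stdComplexGaussian := by
  simp_rw [conj_complexHermite]
  exact (memLp_two_complexHermite p q).integrable_mul (memLp_two_complexHermite d c)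

noncomputable def complexHermiteInner (p q c d : ℕ) : ℂ :=
  ∫ z, complexHermite p q z * conj (complexHermite c d z) ∂stdComplexGaussian

lemma complexHermiteInner_conj_symm (p q c d : ℕ) :
    complexHermiteInner c d p q = conj (complexHermiteInner p q c d) := by
  rw [complexHermiteInner, complexHermiteInner, ← integral_conj]
  simp only [map_mul, conj_conj, mul_comm]

lemma complexHermiteInner_succ_left (p q c d : ℕ) :
    complexHermiteInner (p + 1) q c d = complexHermiteInner p q c (d + 1)
      + c * complexHermiteInner p q (c - 1) d - q * complexHermiteInner p (q - 1) c d := by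
  have hpointwise (z : ℂ) : complexHermite (p + 1) q z * conj (complexHermite c d z)
      = complexHermite p q z * conj (complexHermite c (d + 1) z)
        + c * (complexHermite p q z * conj (complexHermite (c - 1) d z))
        - q * (complexHermite p (q - 1) z * conj (complexHermite c d z)) := by
    rw [complexHermite_succ_left, complexHermite_succ_right]
    simp only [map_sub, map_mul, map_natCast, conj_conj]
    ring
  have hint := integrable_complexHermite_mul_conj
  simp only [complexHermiteInner, hpointwise]
  rw [integral_sub ?_ ((hint _ _ _ _).const_mul _),
    integral_add (hint _ _ _ _) ((hint _ _ _ _).const_mul _), integral_const_mul,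
    integral_const_mul]
  exact (hint _ _ _ _).add ((hint _ _ _ _).const_mul _)

lemma complexHermiteInner_zero_right (c d q : ℕ) :
    complexHermiteInner c d 0 q = factorialDelta c 0 * factorialDelta d q := by
  induction c generalizing d q with
  | zero =>
    simp only [complexHermiteInner, complexHermite_zero_left, map_pow, conj_conj,
      mul_comm (conj _ ^ d), integral_pow_mul_conj_pow_stdComplexGaussian, factorialDelta_self,
      factorialDelta_comm q d, Nat.factorial_zero, Nat.cast_one, one_mul]
  | succ c ih =>
    simp only [complexHermiteInner_succ_left, ih, factorialDelta_succ_left,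
      factorialDelta_succ_right]
    push_cast
    ring

lemma complexHermiteInner_eq (p q c d : ℕ) :
    complexHermiteInner p q c d = factorialDelta p c * factorialDelta q d := by
  induction p generalizing q c d with
  | zero =>
    rw [complexHermiteInner_conj_symm, complexHermiteInner_zero_right, factorialDelta_comm c,
      factorialDelta_comm d, map_mul, map_natCast, map_natCast]
  | succ p ih =>
    simp only [complexHermiteInner_succ_left, ih, factorialDelta_succ_left,
      factorialDelta_succ_right]
    push_cast
    ring

/-- Orthogonality of the complex Hermite polynomials with respect to the
standard complex Gaussian measure, and ∫|H_{p,q}|² dγ = p!q!. -/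
theorem complexHermite_orthogonality (p q p' q' : ℕ) :
    ((p, q) ≠ (p', q') →
      ∫ z, complexHermite p q z * (starRingEnd ℂ) (complexHermite p' q' z)
        ∂stdComplexGaussian = 0) ∧
    (∫ z, ‖complexHermite p q z‖ ^ 2 ∂stdComplexGaussian
      = p.factorial * q.factorial) := by
  refine ⟨fun hne => ?_, ?_⟩
  · have hdelta : factorialDelta p p' * factorialDelta q q' = 0 := by
      rcases not_and_or.1 (mt Prod.ext_iff.2 hne) with h | h
      · rw [factorialDelta_of_ne h, zero_mul]
      · rw [factorialDelta_of_ne h, mul_zero]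
    change complexHermiteInner p q p' q' = 0
    rw [complexHermiteInner_eq]
    exact_mod_cast hdelta
  · have h := complexHermiteInner_eq p q p q
    simp only [complexHermiteInner, mul_conj', ← ofReal_pow, integral_complex_ofReal,
      factorialDelta_self] at h
    exact_mod_cast h
end
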